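/- arXiv:1103.1845 — 2 statements merged into one kernel-verified Lean document; each statement's English description precedes it below -/
import Mathlib

section
/- Let (X, μ) be a measure space, 1 < p < ∞, and let η : X → [0, ∞) be measurable with 0 < ∫_X η^p dμ < ∞. Let f : X → ℝ be measurable with ∫_X |f|^p η^p dμ < ∞, and suppose there exists γ ∈ (0, 1) such that ∫_A η^p dμ ≤ γ ∫_X η^p dμ, where A = {x ∈ X : f(x) ≠ 0}. Set f_η = (∫_X f η^p dμ) / (∫_X η^p dμ). Then (∫_X |f|^p η^p dμ)^{1/p} ≤ (1 − γ^{(p−1)/p})^{−1} (∫_X |f − f_η|^p η^p dμ)^{1/p}. -/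
open MeasureTheory
open scoped ENNReal

/-! With `ν = η^p μ` the claim reads `‖f‖ ≤ (1 - γ^(1 - 1/p))⁻¹ ‖f - c‖` in `L^p(ν)`, where
`c = ⨍ f dν`. Minkowski gives `‖f‖ ≤ ‖f - c‖ + |c| ν(X)^(1/p)`, and Hölder on the support `A` of
`f` gives `|c| ν(X) ≤ ‖f‖ ν(A)^(1 - 1/p) ≤ γ^(1 - 1/p) ‖f‖ ν(X)^(1 - 1/p)`. Hence the constant
term is at most `γ^(1 - 1/p) ‖f‖`, which is absorbed into the left-hand side since
`γ^(1 - 1/p) < 1` and `‖f‖ < ∞`. -/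

theorem ENNReal.le_inv_one_sub_mul_of_le_add_mul {a b θ : ℝ≥0∞} (ha : a ≠ ∞) (hθ : θ < 1)
    (h : a ≤ b + θ * a) : a ≤ (1 - θ)⁻¹ * b := by
  have hθa : (1 - θ) * a ≤ b := by
    rw [ENNReal.sub_mul fun _ _ ↦ ha, one_mul, tsub_le_iff_right]
    exact h
  exact (ENNReal.mul_le_iff_le_inv (tsub_pos_of_lt hθ).ne' (by finiteness)).mp hθa

theorem ENNReal.one_sub_one_div_toReal_pos {p : ℝ≥0∞} (hp : 1 < p) (hp_top : p ≠ ∞) :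
    0 < 1 - 1 / p.toReal := by
  have hp_real : 1 < p.toReal := by
    simpa using (ENNReal.toReal_lt_toReal ENNReal.one_ne_top hp_top).mpr hp
  exact sub_pos.mpr ((div_lt_one (by positivity)).mpr hp_real)

section Absorption

variable {X : Type*} [MeasurableSpace X] {ν : Measure X} {p : ℝ≥0∞} {f : X → ℝ}

theorem enorm_integral_le_eLpNorm_mul_measure_support_rpow (hp : 1 ≤ p)
    (hf : AEStronglyMeasurable f ν) :
    ‖∫ x, f x ∂ν‖ₑ ≤ eLpNorm f p ν * ν (Function.support f) ^ (1 - 1 / p.toReal) := by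
  have hholder :=
    eLpNorm_le_eLpNorm_mul_rpow_measure_univ hp (hf.restrict (s := Function.support f))
  rw [eLpNorm_restrict_eq_of_support_subset subset_rfl,
    eLpNorm_restrict_eq_of_support_subset subset_rfl, Measure.restrict_apply_univ,
    ENNReal.toReal_one, div_one] at hholder
  calc ‖∫ x, f x ∂ν‖ₑ ≤ ∫⁻ x, ‖f x‖ₑ ∂ν := enorm_integral_le_lintegral_enorm f
    _ = eLpNorm f 1 ν := eLpNorm_one_eq_lintegral_enorm.symm
    _ ≤ _ := hholder

variable [IsFiniteMeasure ν]

theorem eLpNorm_average_le (hp : 1 ≤ p) (hp_top : p ≠ ∞) (hf : AEStronglyMeasurable f ν)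
    {γ : ℝ≥0∞} (hγ : ν (Function.support f) ≤ γ * ν Set.univ) :
    eLpNorm (fun _ ↦ ⨍ x, f x ∂ν) p ν ≤ γ ^ (1 - 1 / p.toReal) * eLpNorm f p ν := by
  rcases eq_or_ne ν 0 with rfl | hν
  · simp
  have hp0 : p ≠ 0 := (zero_lt_one.trans_le hp).ne'
  set r := 1 / p.toReal
  have hr : 0 ≤ 1 - r := sub_nonneg.mpr
    (div_le_one_of_le₀ (by simpa using ENNReal.toReal_mono hp_top hp) (by positivity))
  have hs0 : ν Set.univ ≠ 0 := Measure.measure_univ_ne_zero.mpr hν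
  have hstop : ν Set.univ ≠ ∞ := measure_ne_top ν _
  have hmass : ‖⨍ x, f x ∂ν‖ₑ * ν Set.univ = ‖∫ x, f x ∂ν‖ₑ := by
    rw [← measure_smul_average ν f, enorm_smul, Real.enorm_of_nonneg measureReal_nonneg,
      ofReal_measureReal, mul_comm]
  -- multiplying by `ν(X)^(1 - 1/p)` turns the left-hand side into `‖∫ f dν‖ₑ`
  rw [← ENNReal.mul_le_mul_iff_left (c := ν Set.univ ^ (1 - r)) (by positivity) (by finiteness),
    eLpNorm_const' _ hp0 hp_top, mul_assoc, ← ENNReal.rpow_add _ _ hs0 hstop, add_sub_cancel,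
    ENNReal.rpow_one, hmass, mul_right_comm, ← ENNReal.mul_rpow_of_nonneg _ _ hr,
    mul_comm _ (eLpNorm f p ν)]
  exact (enorm_integral_le_eLpNorm_mul_measure_support_rpow hp hf).trans (by gcongr)

theorem eLpNorm_le_inv_one_sub_mul_eLpNorm_sub_average (hp : 1 < p) (hp_top : p ≠ ∞)
    (hf : MemLp f p ν) {γ : ℝ≥0∞} (hγ : ν (Function.support f) ≤ γ * ν Set.univ)
    (hγ1 : γ < 1) :
    eLpNorm f p ν ≤
      (1 - γ ^ (1 - 1 / p.toReal))⁻¹ * eLpNorm (fun x ↦ f x - ⨍ y, f y ∂ν) p ν := by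
  set c := ⨍ y, f y ∂ν
  refine ENNReal.le_inv_one_sub_mul_of_le_add_mul hf.eLpNorm_ne_top
    (ENNReal.rpow_lt_one hγ1 (ENNReal.one_sub_one_div_toReal_pos hp hp_top)) ?_
  calc eLpNorm f p ν = eLpNorm ((fun x ↦ f x - c) + fun _ ↦ c) p ν := by
        congr 1; ext x; simp
    _ ≤ eLpNorm (fun x ↦ f x - c) p ν + eLpNorm (fun _ ↦ c) p ν :=
        eLpNorm_add_le (hf.1.sub aestronglyMeasurable_const) aestronglyMeasurable_const hp.le
    _ ≤ _ := by gcongr; exact eLpNorm_average_le hp.le hp_top hf.1 hγ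

theorem toReal_eLpNorm_le_inv_one_sub_mul_toReal_eLpNorm_sub_average (hp : 1 < p)
    (hp_top : p ≠ ∞) (hf : MemLp f p ν) {γ : ℝ} (hγ0 : 0 ≤ γ) (hγ1 : γ < 1)
    (hγ : ν.real (Function.support f) ≤ γ * ν.real Set.univ) :
    (eLpNorm f p ν).toReal ≤
      (1 - γ ^ (1 - 1 / p.toReal))⁻¹ * (eLpNorm (fun x ↦ f x - ⨍ y, f y ∂ν) p ν).toReal := by
  have hγ' : ν (Function.support f) ≤ ENNReal.ofReal γ * ν Set.univ := by
    rw [← ofReal_measureReal, ← ofReal_measureReal, ← ENNReal.ofReal_mul hγ0]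
    exact ENNReal.ofReal_le_ofReal hγ
  have hγ1' : ENNReal.ofReal γ < 1 := ENNReal.ofReal_lt_one.mpr hγ1
  have hθ1 : ENNReal.ofReal γ ^ (1 - 1 / p.toReal) < 1 :=
    ENNReal.rpow_lt_one hγ1' (ENNReal.one_sub_one_div_toReal_pos hp hp_top)
  have hsub : MemLp (fun x ↦ f x - ⨍ y, f y ∂ν) p ν := hf.sub (memLp_const _)
  have key := ENNReal.toReal_mono
    (ENNReal.mul_ne_top (ENNReal.inv_ne_top.mpr (tsub_pos_of_lt hθ1).ne') hsub.eLpNorm_ne_top)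
    (eLpNorm_le_inv_one_sub_mul_eLpNorm_sub_average hp hp_top hf hγ' hγ1')
  rwa [ENNReal.toReal_mul, ENNReal.toReal_inv, ENNReal.toReal_sub_of_le hθ1.le ENNReal.one_ne_top,
    ← ENNReal.toReal_rpow, ENNReal.toReal_ofReal hγ0, ENNReal.toReal_one] at key

end Absorption

section WithDensity

variable {X : Type*} [MeasurableSpace X] {μ : Measure X} {ρ : X → ℝ}

theorem measureReal_withDensity_ofReal {s : Set X} (hs : MeasurableSet s)
    (hρ : IntegrableOn ρ s μ) (hρ0 : 0 ≤ᵐ[μ.restrict s] ρ) :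
    (μ.withDensity fun x ↦ ENNReal.ofReal (ρ x)).real s = ∫ x in s, ρ x ∂μ := by
  rw [measureReal_def, withDensity_apply _ hs, ← ofReal_integral_eq_lintegral_ofReal hρ hρ0,
    ENNReal.toReal_ofReal (integral_nonneg_of_ae hρ0)]

theorem integral_withDensity_ofReal (hρ : Measurable ρ) (hρ0 : 0 ≤ᵐ[μ] ρ) (g : X → ℝ) :
    ∫ x, g x ∂μ.withDensity (fun x ↦ ENNReal.ofReal (ρ x)) = ∫ x, g x * ρ x ∂μ := by
  rw [integral_withDensity_eq_integral_toReal_smul hρ.ennreal_ofReal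
    (ae_of_all _ fun _ ↦ ENNReal.ofReal_lt_top)]
  refine integral_congr_ae (hρ0.mono fun x hx ↦ ?_)
  simp [ENNReal.toReal_ofReal hx, mul_comm]

theorem average_withDensity_ofReal (hρ : Measurable ρ) (hρi : Integrable ρ μ) (hρ0 : 0 ≤ᵐ[μ] ρ)
    (g : X → ℝ) :
    ⨍ x, g x ∂μ.withDensity (fun x ↦ ENNReal.ofReal (ρ x)) =
      (∫ x, g x * ρ x ∂μ) / ∫ x, ρ x ∂μ := by
  rw [average_eq, measureReal_withDensity_ofReal MeasurableSet.univ hρi.integrableOn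
    (by rwa [Measure.restrict_univ]), Measure.restrict_univ, integral_withDensity_ofReal hρ hρ0,
    smul_eq_mul, div_eq_inv_mul]

theorem eLpNorm_withDensity_ofReal {p : ℝ} (hp : 0 < p) (hρ : Measurable ρ) {g : X → ℝ}
    (hg : Measurable g) :
    eLpNorm g (ENNReal.ofReal p) (μ.withDensity fun x ↦ ENNReal.ofReal (ρ x)) =
      (∫⁻ x, ENNReal.ofReal (|g x| ^ p * ρ x) ∂μ) ^ (1 / p) := by
  rw [eLpNorm_eq_lintegral_rpow_enorm_toReal (by simpa using hp) ENNReal.ofReal_ne_top,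
    ENNReal.toReal_ofReal hp.le,
    lintegral_withDensity_eq_lintegral_mul _ hρ.ennreal_ofReal (hg.enorm.pow_const _)]
  congr 1
  refine lintegral_congr fun x ↦ ?_
  rw [Pi.mul_apply, Real.enorm_eq_ofReal_abs, ENNReal.ofReal_rpow_of_nonneg (abs_nonneg _) hp.le,
    ENNReal.ofReal_mul (by positivity), mul_comm]

theorem toReal_eLpNorm_withDensity_ofReal {p : ℝ} (hp : 0 < p) (hρ : Measurable ρ)
    (hρ0 : 0 ≤ᵐ[μ] ρ) {g : X → ℝ} (hg : Measurable g) :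
    (eLpNorm g (ENNReal.ofReal p) (μ.withDensity fun x ↦ ENNReal.ofReal (ρ x))).toReal =
      (∫ x, |g x| ^ p * ρ x ∂μ) ^ (1 / p) := by
  rw [eLpNorm_withDensity_ofReal hp hρ hg, ← ENNReal.toReal_rpow,
    integral_eq_lintegral_of_nonneg_ae (hρ0.mono fun x hx ↦ mul_nonneg (by positivity) hx)
      (by fun_prop)]

theorem memLp_withDensity_ofReal {p : ℝ} (hp : 0 < p) (hρ : Measurable ρ) {g : X → ℝ}
    (hg : Measurable g) (hgρ : Integrable (fun x ↦ |g x| ^ p * ρ x) μ) :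
    MemLp g (ENNReal.ofReal p) (μ.withDensity fun x ↦ ENNReal.ofReal (ρ x)) := by
  refine ⟨hg.aestronglyMeasurable, ?_⟩
  rw [eLpNorm_withDensity_ofReal hp hρ hg]
  exact ENNReal.rpow_lt_top_of_nonneg (by positivity) hgρ.lintegral_lt_top.ne

end WithDensity

theorem weighted_poincare_absorption_general
    {X : Type*} [MeasurableSpace X] (μ : Measure X)
    (p : ℝ) (hp : 1 < p)
    (η : X → ℝ) (hη_meas : Measurable η) (hη_nonneg : ∀ x, 0 ≤ η x)
    (hηp_int : Integrable (fun x => η x ^ p) μ)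
    (f : X → ℝ) (hf_meas : Measurable f)
    (hfp_int : Integrable (fun x => |f x| ^ p * η x ^ p) μ)
    (γ : ℝ) (hγ : γ ∈ Set.Ioo (0 : ℝ) 1)
    (hA : ∫ x in {x | f x ≠ 0}, η x ^ p ∂μ ≤ γ * ∫ x, η x ^ p ∂μ) :
    (∫ x, |f x| ^ p * η x ^ p ∂μ) ^ (1 / p) ≤
      (1 - γ ^ ((p - 1) / p))⁻¹ *
        (∫ x, |f x - (∫ y, f y * η y ^ p ∂μ) / (∫ y, η y ^ p ∂μ)| ^ p * η x ^ p ∂μ) ^ (1 / p) := by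
  have hp0 : 0 < p := zero_lt_one.trans hp
  have hρ : Measurable fun x ↦ η x ^ p := hη_meas.pow_const p
  have hρ0 : 0 ≤ᵐ[μ] fun x ↦ η x ^ p := ae_of_all _ fun x ↦ Real.rpow_nonneg (hη_nonneg x) p
  set ν := μ.withDensity fun x ↦ ENNReal.ofReal (η x ^ p)
  have : IsFiniteMeasure ν := isFiniteMeasure_withDensity_ofReal hηp_int.2
  have hsupp : ν.real (Function.support f) ≤ γ * ν.real Set.univ := by
    rwa [measureReal_withDensity_ofReal (measurableSet_support hf_meas)
      hηp_int.integrableOn (ae_restrict_of_ae hρ0), measureReal_withDensity_ofReal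
      MeasurableSet.univ hηp_int.integrableOn (ae_restrict_of_ae hρ0), Measure.restrict_univ]
  have key := toReal_eLpNorm_le_inv_one_sub_mul_toReal_eLpNorm_sub_average
    (p := ENNReal.ofReal p) (by simpa using hp) ENNReal.ofReal_ne_top
    (memLp_withDensity_ofReal hp0 hρ hf_meas hfp_int) hγ.1.le hγ.2 hsupp
  rwa [toReal_eLpNorm_withDensity_ofReal hp0 hρ hρ0 hf_meas,
    toReal_eLpNorm_withDensity_ofReal hp0 hρ hρ0 (g := fun x ↦ f x - _) (by fun_prop),
    average_withDensity_ofReal hρ hηp_int hρ0, ENNReal.toReal_ofReal hp0.le,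
    one_sub_div hp0.ne'] at key

/-- Weighted absorption inequality (Corollary 2.2): if `f` vanishes outside a set `A` with
`∫_A η^p ≤ γ ∫ η^p`, then the weighted `L^p`-norm of `f` is controlled by that of `f - f_η`. -/
theorem weighted_poincare_absorption
    {X : Type*} [MeasurableSpace X] (μ : Measure X)
    (p : ℝ) (hp : 1 < p)
    (η : X → ℝ) (hη_meas : Measurable η) (hη_nonneg : ∀ x, 0 ≤ η x)
    (hηp_int : Integrable (fun x => η x ^ p) μ)
    (hηp_pos : 0 < ∫ x, η x ^ p ∂μ)
    (f : X → ℝ) (hf_meas : Measurable f)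
    (hfp_int : Integrable (fun x => |f x| ^ p * η x ^ p) μ)
    (γ : ℝ) (hγ : γ ∈ Set.Ioo (0 : ℝ) 1)
    (hA : ∫ x in {x | f x ≠ 0}, η x ^ p ∂μ ≤ γ * ∫ x, η x ^ p ∂μ) :
    (∫ x, |f x| ^ p * η x ^ p ∂μ) ^ (1 / p) ≤
      (1 - γ ^ ((p - 1) / p))⁻¹ *
        (∫ x, |f x - (∫ y, f y * η y ^ p ∂μ) / (∫ y, η y ^ p ∂μ)| ^ p * η x ^ p ∂μ) ^ (1 / p) :=
  weighted_poincare_absorption_general μ p hp η hη_meas hη_nonneg hηp_int f hf_meas hfp_int γ hγ hA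
end

section
/- Let 1 < p < 2 and t ∈ (0, 1). Then (2 − 4^{2−p} t^{2−p} − 2^{p−2} t^{2−p}) / (2(1 − t^{2−p})) ≤ 1 + (ln 2) t^{2−p}/(2 ln t), and consequently this quantity is strictly less than 1. -/
/-- Bound for the contraction factor `σ̃` in the proof of Proposition 5.2, stable as `p ↑ 2`. -/
theorem contraction_factor_bound (p t : ℝ) (hp1 : 1 < p) (hp2 : p < 2)
    (ht : t ∈ Set.Ioo (0 : ℝ) 1) :
    (2 - 4 ^ (2 - p) * t ^ (2 - p) - 2 ^ (p - 2) * t ^ (2 - p)) / (2 * (1 - t ^ (2 - p))) ≤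
        1 + Real.log 2 * t ^ (2 - p) / (2 * Real.log t) ∧
      (2 - 4 ^ (2 - p) * t ^ (2 - p) - 2 ^ (p - 2) * t ^ (2 - p)) / (2 * (1 - t ^ (2 - p))) < 1 := by
  obtain ⟨ht0, ht1⟩ := ht
  set s : ℝ := 2 - p with hs_def
  have hs : 0 < s := by simp [hs_def]; linarith
  set a : ℝ := (4 : ℝ) ^ s with ha_def
  set b : ℝ := (2 : ℝ) ^ (p - 2) with hb_def
  set u : ℝ := t ^ s with hu_def
  set c : ℝ := Real.log 2 with hc_def
  set l : ℝ := Real.log t with hl_def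
  have hc : 0 < c := Real.log_pos (by norm_num)
  have hl : l < 0 := Real.log_neg ht0 ht1
  have hu0 : 0 < u := Real.rpow_pos_of_pos ht0 s
  have hu1 : u < 1 := Real.rpow_lt_one ht0.le ht1 hs
  have hlog4 : Real.log 4 = 2 * c := by
    rw [show (4:ℝ) = 2 ^ (2:ℕ) by norm_num, Real.log_pow]; push_cast; ring
  -- exp lower bounds
  have ha : 1 + s * (2 * c) ≤ a := by
    rw [ha_def, Real.rpow_def_of_pos (by norm_num), hlog4]
    have := Real.add_one_le_exp (2 * c * s)
    linarith
  have hb : 1 - s * c ≤ b := by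
    rw [hb_def, Real.rpow_def_of_pos (by norm_num), ← hc_def]
    have := Real.add_one_le_exp (c * (p - 2))
    have hps : p - 2 = -s := by rw [hs_def]; ring
    nlinarith
  have hab : 2 + s * c ≤ a + b := by linarith
  have htu : 1 + s * l ≤ u := by
    rw [hu_def, Real.rpow_def_of_pos ht0, ← hl_def]
    have := Real.add_one_le_exp (l * s)
    linarith
  have hden : (0:ℝ) < 2 * (1 - u) := by linarith
  constructor
  · rw [div_le_iff₀ hden]
    have key : -(c * s * u) ≤ c * u * (1 - u) / l := by
      rw [le_div_iff_of_neg hl]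
      nlinarith [mul_nonneg (mul_pos hc hu0).le (by linarith : (0:ℝ) ≤ -(s * l) - (1 - u))]
    have hexp : c * u / (2 * l) * (2 * (1 - u)) = c * u * (1 - u) / l := by
      rw [div_mul_eq_mul_div, eq_div_iff hl.ne, div_mul_eq_mul_div,
        div_eq_iff (mul_ne_zero two_ne_zero hl.ne)]
      ring
    have key2 : 2 * (1 - u) - c * s * u ≤ (1 + c * u / (2 * l)) * (2 * (1 - u)) := by
      have hx : (1 + c * u / (2 * l)) * (2 * (1 - u)) =
          2 * (1 - u) + c * u / (2 * l) * (2 * (1 - u)) := by ring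
      rw [hx, hexp]; linarith
    have h3 : (2 + s * c) * u ≤ (a + b) * u := mul_le_mul_of_nonneg_right hab hu0.le
    refine le_trans ?_ key2
    nlinarith [h3]
  · rw [div_lt_one hden]
    nlinarith [mul_pos hs hc]
end
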